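/- Let α₁,...,αₙ (n ≥ 3) be the roots of a monic polynomial in ℤ[x] with constant term (-1)^n, none a root of unity, and suppose the set of roots has full rank. Then the products αᵢαⱼ for 1 ≤ j < i ≤ n are pairwise distinct; consequently p₂(x) = ∏_{j<i}(x - αᵢαⱼ) has no repeated roots and cannot equal rˢ for an irreducible r with s ≥ 2. -/

import Mathlib

open Polynomial

/-!
The roots are nonzero, since the constant term `(-1)ⁿ` makes their product `1`. A relation
`αᵢαⱼ = αₖαₗ` then has exponent vector `eᵢ + eⱼ - eₖ - eₗ`, whose coordinates sum to `0`; full rank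
makes it constant, hence zero, so `{i, j} = {k, l}`. Distinct roots make `p₂` separable, hence
squarefree, and a squarefree non-unit is not an `s`-th power for `s ≥ 2`.
-/

open Finset

section

variable {ι G : Type*} [Fintype ι]

def FullRank [CommGroupWithZero G] (α : ι → G) : Prop :=
  ∀ d : ι → ℤ, ∏ j, α j ^ d j = 1 → ∀ j k, d j = d k

lemma coeff_zero_prod_X_sub_C {R : Type*} [CommRing R] (α : ι → R) :
    (∏ j, (X - C (α j))).coeff 0 = (-1) ^ Fintype.card ι * ∏ j, α j := by
  simp [coeff_zero_eq_eval_zero, eval_prod, prod_neg]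

lemma prod_eq_one_of_map_eq_prod_X_sub_C {R : Type*} [CommRing R] {p : ℤ[X]} {α : ι → R}
    (hroots : p.map (Int.castRingHom R) = ∏ j, (X - C (α j)))
    (hconst : p.coeff 0 = (-1) ^ Fintype.card ι) : ∏ j, α j = 1 := by
  have h := congrArg (coeff · 0) hroots
  simp only [coeff_map, hconst, coeff_zero_prod_X_sub_C, eq_intCast, Int.cast_pow,
    Int.cast_neg, Int.cast_one] at h
  exact ((isUnit_neg_one.pow _).mul_left_cancel (h.symm.trans (mul_one _).symm))

lemma eq_zero_of_forall_eq_of_sum_eq_zero [Nonempty ι] {d : ι → ℤ}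
    (hconst : ∀ j k, d j = d k) (hsum : ∑ j, d j = 0) : d = 0 := by
  obtain ⟨j₀⟩ := ‹Nonempty ι›
  have hcard : (Fintype.card ι : ℤ) * d j₀ = 0 := by
    rw [← hsum, ← nsmul_eq_mul, ← card_univ, ← sum_const]
    exact sum_congr rfl fun j _ => hconst j₀ j
  funext j
  rw [hconst j j₀]
  exact (mul_eq_zero.1 hcard).resolve_left (by exact_mod_cast Fintype.card_ne_zero)

lemma prod_zpow_single_add_single [CommGroupWithZero G] [DecidableEq ι] {α : ι → G}
    (hα : ∀ t, α t ≠ 0) (a b : ι) :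
    ∏ t, α t ^ (Pi.single a 1 + Pi.single b 1 : ι → ℤ) t = α a * α b := by
  simp only [Pi.add_apply, zpow_add₀ (hα _), prod_mul_distrib]
  simp [Pi.single_apply]

lemma FullRank.eq_of_mul_eq_mul [CommGroupWithZero G] [LinearOrder ι] {α : ι → G}
    (hfr : FullRank α) (hα : ∀ t, α t ≠ 0) {i j k l : ι} (hji : j < i) (hlk : l < k)
    (h : α i * α j = α k * α l) : i = k ∧ j = l := by
  have hrel : ∏ t, α t ^ ((Pi.single i 1 + Pi.single j 1) -
      (Pi.single k 1 + Pi.single l 1) : ι → ℤ) t = 1 := by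
    simp only [Pi.sub_apply, zpow_sub₀ (hα _), prod_div_distrib,
      prod_zpow_single_add_single hα, h, div_self (mul_ne_zero (hα k) (hα l))]
  have : Nonempty ι := ⟨i⟩
  have hzero := eq_zero_of_forall_eq_of_sum_eq_zero (hfr _ hrel) (by simp [sum_add_distrib])
  rcases (Pi.single_add_single_eq_single_add_single one_ne_zero one_ne_zero).1
    (sub_eq_zero.1 hzero) with hikjl | ⟨-, rfl, rfl⟩ | ⟨htwo, -⟩
  · exact hikjl
  · exact absurd (hji.trans hlk) (lt_irrefl _)
  · norm_num at htwo

lemma squarefree_prod_X_sub_C_of_injOn {K κ : Type*} [Field K] {s : Finset κ} {f : κ → K}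
    (hf : Set.InjOn f s) : Squarefree (∏ x ∈ s, (X - C (f x))) :=
  (separable_prod_X_sub_C_iff'.2 fun _ hx _ hy hxy => hf hx hy hxy).squarefree

lemma not_isUnit_prod_X_sub_C {R κ : Type*} [CommRing R] [Nontrivial R] {s : Finset κ}
    (hs : s.Nonempty) (f : κ → R) : ¬IsUnit (∏ x ∈ s, (X - C (f x))) := fun hu =>
  let ⟨_, hx⟩ := hs
  not_isUnit_X_sub_C _ (isUnit_of_dvd_unit (dvd_prod_of_mem _ hx) hu)

lemma Squarefree.ne_pow {M : Type*} [Monoid M] {q : M} (hq : Squarefree q) (hq₁ : ¬IsUnit q)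
    (a : M) {s : ℕ} (hs : 2 ≤ s) : a ^ s ≠ q := by
  rintro rfl
  rcases hq.eq_zero_or_one_of_pow_of_not_isUnit fun ha => hq₁ (ha.pow s) with h | h <;> omega

end

theorem stmt_12_general (n : ℕ) (hn : 3 ≤ n) (p₁ : Polynomial ℤ)
    (hconst : p₁.coeff 0 = (-1) ^ n)
    (α : Fin n → ℂ)
    (hroots : p₁.map (Int.castRingHom ℂ) = ∏ j, (X - C (α j)))
    (hfr : ∀ d : Fin n → ℤ, (∏ j, α j ^ d j) = 1 → ∀ j k, d j = d k) :
    (∀ i j k l : Fin n, j < i → l < k → α i * α j = α k * α l → i = k ∧ j = l) ∧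
    Squarefree (∏ ij ∈ Finset.univ.filter (fun ij : Fin n × Fin n => ij.2 < ij.1),
      (X - C (α ij.1 * α ij.2))) ∧
    ∀ r : Polynomial ℤ, ∀ s : ℕ, 2 ≤ s → Irreducible r →
      (r ^ s).map (Int.castRingHom ℂ) ≠
        ∏ ij ∈ Finset.univ.filter (fun ij : Fin n × Fin n => ij.2 < ij.1),
          (X - C (α ij.1 * α ij.2)) := by
  have hprod : ∏ j, α j = 1 := prod_eq_one_of_map_eq_prod_X_sub_C hroots (by simpa using hconst)
  have hα : ∀ t, α t ≠ 0 := fun t => prod_ne_zero_iff.1 (hprod ▸ one_ne_zero) t (mem_univ t)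
  have hinj : ∀ i j k l : Fin n, j < i → l < k → α i * α j = α k * α l → i = k ∧ j = l :=
    fun _ _ _ _ hji hlk => FullRank.eq_of_mul_eq_mul hfr hα hji hlk
  have hsq : Squarefree (∏ ij ∈ univ.filter (fun ij : Fin n × Fin n => ij.2 < ij.1),
      (X - C (α ij.1 * α ij.2))) :=
    squarefree_prod_X_sub_C_of_injOn fun x hx y hy hxy =>
      Prod.ext_iff.2 (hinj _ _ _ _ (mem_filter.1 hx).2 (mem_filter.1 hy).2 hxy)
  refine ⟨hinj, hsq, fun r s hs _ => ?_⟩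
  rw [Polynomial.map_pow]
  have hpair : ((⟨1, by omega⟩, ⟨0, by omega⟩) : Fin n × Fin n) ∈
      univ.filter (fun ij : Fin n × Fin n => ij.2 < ij.1) := by
    simp only [mem_filter, mem_univ, true_and, Fin.mk_lt_mk, Nat.zero_lt_one]
  exact hsq.ne_pow (not_isUnit_prod_X_sub_C ⟨_, hpair⟩ _) _ hs

/-- Let `α₁,…,αₙ` (`n ≥ 3`) be the roots of a monic integer polynomial with
constant term `(-1)ⁿ`, none a root of unity, with the set of roots of full rank.
Then the products `αᵢαⱼ` (`j < i`) are pairwise distinct; consequently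
`p₂(x) = ∏_{j<i}(x - αᵢαⱼ)` has no repeated roots and cannot equal `rˢ` for an
irreducible `r ∈ ℤ[x]` with `s ≥ 2`. -/
theorem stmt_12 (n : ℕ) (hn : 3 ≤ n) (p₁ : Polynomial ℤ) (hmonic : p₁.Monic)
    (hdeg : p₁.natDegree = n) (hconst : p₁.coeff 0 = (-1) ^ n)
    (α : Fin n → ℂ)
    (hroots : p₁.map (Int.castRingHom ℂ) = ∏ j, (X - C (α j)))
    (hnru : ∀ j, ∀ k : ℕ, 0 < k → α j ^ k ≠ 1)
    (hfr : ∀ d : Fin n → ℤ, (∏ j, α j ^ d j) = 1 → ∀ j k, d j = d k) :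
    (∀ i j k l : Fin n, j < i → l < k → α i * α j = α k * α l → i = k ∧ j = l) ∧
    Squarefree (∏ ij ∈ Finset.univ.filter (fun ij : Fin n × Fin n => ij.2 < ij.1),
      (X - C (α ij.1 * α ij.2))) ∧
    ∀ r : Polynomial ℤ, ∀ s : ℕ, 2 ≤ s → Irreducible r →
      (r ^ s).map (Int.castRingHom ℂ) ≠
        ∏ ij ∈ Finset.univ.filter (fun ij : Fin n × Fin n => ij.2 < ij.1),
          (X - C (α ij.1 * α ij.2)) :=
  stmt_12_general n hn p₁ hconst α hroots hfr
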